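/- Let A be a pseudo-BCI-algebra with group part G_A = {x→1 : x ∈ A}. Then for all x ∈ A and g ∈ G_A: x → g = (g → x) → 1 and x ⇝ g = (g ⇝ x) → 1. -/
import Mathlib


class PseudoBCI (A : Type*) where
  ar : A → A → A
  sq : A → A → A
  one : A
  ax1 : ∀ x y z : A, sq (ar x y) (sq (ar y z) (ar x z)) = one
  ax2 : ∀ x y z : A, ar (sq x y) (ar (sq y z) (sq x z)) = one
  ax3 : ∀ x : A, ar one x = x
  ax4 : ∀ x : A, sq one x = x
  ax5 : ∀ x y : A, ar x y = one → ar y x = one → x = y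

open PseudoBCI

section Lemmas

variable {A : Type*} [PseudoBCI A]

lemma sq_self (x : A) : sq x x = one := by
  have h := ax1 (A := A) one one x
  rwa [ax3, ax4, ax3] at h

lemma ar_self (x : A) : ar x x = one := by
  have h := ax2 (A := A) one one x
  rwa [ax4, ax3, ax4] at h

lemma d1 (x y : A) : sq x (sq (ar x y) y) = one := by
  have h := ax1 (A := A) one x y
  rwa [ax3, ax3] at h

lemma d2 (x y : A) : ar x (ar (sq x y) y) = one := by
  have h := ax2 (A := A) one x y
  rwa [ax4, ax4] at h

lemma sq_of_ar {x y : A} (h : ar x y = one) : sq x y = one := by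
  have h1 := d1 x y
  rwa [h, ax4] at h1

lemma ar_of_sq {x y : A} (h : sq x y = one) : ar x y = one := by
  have h1 := d2 x y
  rwa [h, ax3] at h1

lemma a1' {x y : A} (h : ar x y = one) (z : A) :
    sq (ar y z) (ar x z) = one := by
  have h1 := ax1 x y z
  rwa [h, ax4] at h1

lemma a2' {x y : A} (h : sq x y = one) (z : A) :
    ar (sq y z) (sq x z) = one := by
  have h1 := ax2 x y z
  rwa [h, ax3] at h1

lemma trans_ar {x y z : A} (hxy : ar x y = one) (hyz : ar y z = one) :
    ar x z = one := by
  have h := a1' hxy z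
  rwa [hyz, ax4] at h

lemma trans_sq {x y z : A} (hxy : sq x y = one) (hyz : sq y z = one) :
    sq x z = one := by
  have h := a2' hxy z
  rwa [hyz, ax3] at h

lemma exchange (x y z : A) : ar x (sq y z) = sq y (ar x z) := by
  apply ax5
  · -- ar (ar x (sq y z)) (sq y (ar x z)) = one
    have h1 : sq (ar x (sq y z)) (sq (ar (sq y z) z) (ar x z)) = one :=
      ax1 x (sq y z) z
    have h2 : ar y (ar (sq y z) z) = one := d2 y z
    have h3 : ar (sq (ar (sq y z) z) (ar x z)) (sq y (ar x z)) = one :=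
      a2' (sq_of_ar h2) (ar x z)
    exact trans_ar (ar_of_sq h1) h3
  · -- ar (sq y (ar x z)) (ar x (sq y z)) = one
    have h1 : ar (sq y (ar x z)) (ar (sq (ar x z) z) (sq y z)) = one :=
      ax2 y (ar x z) z
    have h2 : sq x (sq (ar x z) z) = one := d1 x z
    have h3 : sq (ar (sq (ar x z) z) (sq y z)) (ar x (sq y z)) = one :=
      a1' (ar_of_sq h2) (sq y z)
    exact trans_ar h1 (ar_of_sq h3)

lemma exchange' (x y z : A) : sq x (ar y z) = ar y (sq x z) := by
  apply ax5
  · have h1 : ar (sq x (ar y z)) (ar (sq (ar y z) z) (sq x z)) = one :=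
      ax2 x (ar y z) z
    have h2 : sq y (sq (ar y z) z) = one := d1 y z
    have h3 : sq (ar (sq (ar y z) z) (sq x z)) (ar y (sq x z)) = one :=
      a1' (ar_of_sq h2) (sq x z)
    exact trans_ar h1 (ar_of_sq h3)
  · have h1 : sq (ar y (sq x z)) (sq (ar (sq x z) z) (ar y z)) = one :=
      ax1 y (sq x z) z
    have h2 : ar x (ar (sq x z) z) = one := d2 x z
    have h3 : ar (sq (ar (sq x z) z) (ar y z)) (sq x (ar y z)) = one :=
      a2' (sq_of_ar h2) (ar y z)
    exact trans_ar (ar_of_sq h1) h3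

lemma phi_eq (x : A) : ar x one = sq x one := by
  have h := exchange x x x
  rwa [sq_self, ar_self] at h

/-- Elements of the group part are maximal (→ version). -/
lemma maximal {a x : A} (h : ar (ar a one) x = one) : x = ar a one := by
  have ht : sq (ar x (ar a one)) one = one := by
    have h1 := a1' h (ar a one)
    rwa [ar_self (ar a one)] at h1
  have h5 : sq (ar x (ar a one)) (ar a one) = ar a one := by
    have e := exchange' (ar x (ar a one)) a one
    rw [e, ht]
  have hx : sq x (ar a one) = one := by
    have h1 := d1 x (ar a one)
    rwa [h5] at h1
  exact ax5 _ _ (ar_of_sq hx) h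

/-- Elements of the group part are maximal (⇝ version). -/
lemma maximal' {a x : A} (h : sq (sq a one) x = one) : x = sq a one := by
  have ht : ar (sq x (sq a one)) one = one := by
    have h1 := a2' h (sq a one)
    rwa [sq_self (sq a one)] at h1
  have h5 : ar (sq x (sq a one)) (sq a one) = sq a one := by
    have e := exchange (sq x (sq a one)) a one
    rw [e, ht]
  have hx : ar x (sq a one) = one := by
    have h1 := d2 x (sq a one)
    rwa [h5] at h1
  exact ax5 _ _ hx (ar_of_sq h)

end Lemmas

theorem stmt18 {A : Type*} [PseudoBCI A] (x g : A) (hg : ∃ a : A, ar a one = g) :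
    ar x g = ar (ar g x) one ∧ sq x g = ar (sq g x) one := by
  obtain ⟨a, ha⟩ := hg
  constructor
  · -- ar x g = ar (ar g x) one
    have hP : ar (ar (ar g x) one) (ar x g) = one := by
      have e1 : ar x g = sq a (ar x one) := by
        calc ar x g = ar x (sq a one) := by rw [← phi_eq, ha]
          _ = sq a (ar x one) := exchange x a one
      rw [e1, exchange (ar (ar g x) one) a (ar x one)]
      -- goal: sq a (ar (ar (ar g x) one) (ar x one)) = one
      have e3 : sq x (ar g x) = sq (ar a one) one := by
        calc sq x (ar g x) = ar g (sq x x) := exchange' x g x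
          _ = ar g one := by rw [sq_self]
          _ = ar (ar a one) one := by rw [ha]
          _ = sq (ar a one) one := phi_eq (ar a one)
      have hm : sq a (sq x (ar g x)) = one := by
        rw [e3]; exact d1 a one
      have hS : ar (sq x (ar g x)) (ar (sq (ar g x) one) (sq x one)) = one :=
        ax2 x (ar g x) one
      have hc : sq a (ar (sq (ar g x) one) (sq x one)) = one :=
        trans_sq hm (sq_of_ar hS)
      rwa [← phi_eq (ar g x), ← phi_eq x] at hc
    exact maximal hP
  · -- sq x g = ar (sq g x) one
    have hP : sq (sq (sq g x) one) (sq x g) = one := by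
      have e1 : sq x g = ar a (sq x one) := by
        calc sq x g = sq x (ar a one) := by rw [ha]
          _ = ar a (sq x one) := exchange' x a one
      rw [e1, exchange' (sq (sq g x) one) a (sq x one)]
      -- goal: ar a (sq (sq (sq g x) one) (sq x one)) = one
      have e3 : ar x (sq g x) = ar (sq a one) one := by
        calc ar x (sq g x) = sq g (ar x x) := exchange x g x
          _ = sq g one := by rw [ar_self]
          _ = sq (sq a one) one := by rw [← ha, phi_eq a]
          _ = ar (sq a one) one := (phi_eq (sq a one)).symm
      have hm : ar a (ar x (sq g x)) = one := by
        rw [e3]; exact d2 a one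
      have hS : sq (ar x (sq g x)) (sq (ar (sq g x) one) (ar x one)) = one :=
        ax1 x (sq g x) one
      have hc : ar a (sq (ar (sq g x) one) (ar x one)) = one :=
        trans_ar hm (ar_of_sq hS)
      rwa [phi_eq (sq g x), phi_eq x] at hc
    rw [maximal' hP]
    exact (phi_eq (sq g x)).symm
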